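/- Let X be an indecomposable bifree H₂-H₁ biset. (a) If both the left H₂-action and the right H₁-action on X are transitive, then the opposite biset τ(X) is a two-sided inverse for X: there is an isomorphism of H₂-H₂ bisets X ×_{H₁} τ(X) ≅ H₂ (where H₂ carries left and right multiplication) and an isomorphism of H₁-H₁ bisets τ(X) ×_{H₂} X ≅ H₁. (b) Conversely, if there exists a bifree H₁-H₂ biset Y together with isomorphisms of bisets X ×_{H₁} Y ≅ H₂ and Y ×_{H₂} X ≅ H₁, then both the left H₂-action and the right H₁-action on X are transitive. -/
import Mathlib


/-- A biset: a set `X` with a left `H₂`-action and a right `H₁`-action that commute. -/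
structure BisetAction (H₂ H₁ X : Type*) [Group H₂] [Group H₁] where
  l : H₂ → X → X
  r : X → H₁ → X
  l_one : ∀ x, l 1 x = x
  l_mul : ∀ a b x, l (a * b) x = l a (l b x)
  r_one : ∀ x, r x 1 = x
  r_mul : ∀ x a b, r x (a * b) = r (r x a) b
  comm : ∀ a x b, r (l a x) b = l a (r x b)

namespace BisetAction

variable {H₂ H₁ X : Type*} [Group H₂] [Group H₁]

/-- Both actions are free. -/
def Bifree (B : BisetAction H₂ H₁ X) : Prop :=
  (∀ (a : H₂) (x : X), B.l a x = x → a = 1) ∧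
  (∀ (x : X) (b : H₁), B.r x b = x → b = 1)

/-- Indecomposable: transitive as a combined `(H₂, H₁)`-set. -/
def Indecomposable (B : BisetAction H₂ H₁ X) : Prop :=
  ∀ x y : X, ∃ (a : H₂) (b : H₁), y = B.r (B.l a x) b

/-- The subset `L_x = {h₂ ∈ H₂ | ∃ h₁, h₂·x = x·h₁}` of `H₂`. -/
def Lset (B : BisetAction H₂ H₁ X) (x : X) : Set H₂ :=
  {h₂ | ∃ h₁ : H₁, B.l h₂ x = B.r x h₁}

/-- The subset `K_x = {h₁ ∈ H₁ | ∃ h₂, h₂·x = x·h₁}` of `H₁`. -/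
def Rset (B : BisetAction H₂ H₁ X) (x : X) : Set H₁ :=
  {h₁ | ∃ h₂ : H₂, B.l h₂ x = B.r x h₁}

end BisetAction

/-- The opposite biset `τ(X)`: same set, left `H₁`-action `h₁ ∗ y = y·h₁⁻¹`,
right `H₂`-action `y ∗ h₂ = h₂⁻¹·y`. -/
def BisetAction.op {H₂ H₁ X : Type*} [Group H₂] [Group H₁]
    (B : BisetAction H₂ H₁ X) : BisetAction H₁ H₂ X where
  l := fun h₁ y => B.r y h₁⁻¹
  r := fun y h₂ => B.l h₂⁻¹ y
  l_one := fun x => by show B.r x (1 : H₁)⁻¹ = x; rw [inv_one]; exact B.r_one x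
  l_mul := fun a b x => by
    show B.r x (a * b)⁻¹ = B.r (B.r x b⁻¹) a⁻¹
    rw [mul_inv_rev, B.r_mul]
  r_one := fun x => by show B.l (1 : H₂)⁻¹ x = x; rw [inv_one]; exact B.l_one x
  r_mul := fun x a b => by
    show B.l (a * b)⁻¹ x = B.l b⁻¹ (B.l a⁻¹ x)
    rw [mul_inv_rev, B.l_mul]
  comm := fun a x b => (B.comm b⁻¹ x a⁻¹).symm

/-- The relation on `X₂ × X₁` whose quotient is the balanced product `X₂ ×_{H₂} X₁`;
it identifies `(x₂·h, x₁)` with `(x₂, h·x₁)` for `h ∈ H₂`. -/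
def bpRel {H₃ H₂ H₁ X₂ X₁ : Type*} [Group H₃] [Group H₂] [Group H₁]
    (B₂ : BisetAction H₃ H₂ X₂) (B₁ : BisetAction H₂ H₁ X₁) :
    X₂ × X₁ → X₂ × X₁ → Prop :=
  fun p q => ∃ h : H₂, p.1 = B₂.r q.1 h ∧ q.2 = B₁.l h p.2


section AuxLemmas

variable {H₂ H₁ X : Type*} [Group H₂] [Group H₁]

lemma BisetAction.aux_l_cancel (B : BisetAction H₂ H₁ X) (hB : B.Bifree)
    {a a' : H₂} {x : X} (h : B.l a x = B.l a' x) : a = a' := by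
  have h1 : B.l (a'⁻¹ * a) x = x := by
    rw [B.l_mul, h, ← B.l_mul, inv_mul_cancel, B.l_one]
  have := hB.1 _ _ h1
  rwa [inv_mul_eq_one, eq_comm] at this

lemma BisetAction.aux_r_cancel (B : BisetAction H₂ H₁ X) (hB : B.Bifree)
    {b b' : H₁} {x : X} (h : B.r x b = B.r x b') : b = b' := by
  have h1 : B.r x (b * b'⁻¹) = x := by
    rw [B.r_mul, h, ← B.r_mul, mul_inv_cancel, B.r_one]
  have := hB.2 _ _ h1
  rwa [mul_inv_eq_one] at this

lemma BisetAction.aux_l_injx (B : BisetAction H₂ H₁ X) (a : H₂) {x y : X}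
    (h : B.l a x = B.l a y) : x = y := by
  have := congrArg (B.l a⁻¹) h
  rwa [← B.l_mul, ← B.l_mul, inv_mul_cancel, B.l_one, B.l_one] at this

end AuxLemmas

lemma bpRel_equivalence {H₃ H₂ H₁ X₂ X₁ : Type*} [Group H₃] [Group H₂] [Group H₁]
    (B₂ : BisetAction H₃ H₂ X₂) (B₁ : BisetAction H₂ H₁ X₁) :
    Equivalence (bpRel B₂ B₁) where
  refl p := ⟨1, by rw [B₂.r_one], by rw [B₁.l_one]⟩
  symm := by
    rintro p q ⟨h, h1, h2⟩
    refine ⟨h⁻¹, ?_, ?_⟩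
    · rw [h1, ← B₂.r_mul, mul_inv_cancel, B₂.r_one]
    · rw [h2, ← B₁.l_mul, inv_mul_cancel, B₁.l_one]
  trans := by
    rintro p q s ⟨h, h1, h2⟩ ⟨h', h1', h2'⟩
    refine ⟨h' * h, ?_, ?_⟩
    · rw [h1, h1', ← B₂.r_mul]
    · rw [h2', h2, ← B₁.l_mul]

lemma bp_mk_eq {H₃ H₂ H₁ X₂ X₁ : Type*} [Group H₃] [Group H₂] [Group H₁]
    (B₂ : BisetAction H₃ H₂ X₂) (B₁ : BisetAction H₂ H₁ X₁) {p q : X₂ × X₁}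
    (h : Quot.mk (bpRel B₂ B₁) p = Quot.mk (bpRel B₂ B₁) q) : bpRel B₂ B₁ p q := by
  rw [Quot.eq] at h
  exact (bpRel_equivalence B₂ B₁).eqvGen_iff.mp h


universe u₁ u₂ u₃ u₄

/-- (a) If an indecomposable bifree `H₂`-`H₁` biset `X` has both actions transitive,
then `τ(X)` is a two-sided inverse: `X ×_{H₁} τ(X) ≅ H₂` and `τ(X) ×_{H₂} X ≅ H₁`
as bisets.  (b) Conversely, if some bifree `H₁`-`H₂` biset `Y` satisfies
`X ×_{H₁} Y ≅ H₂` and `Y ×_{H₂} X ≅ H₁`, then both actions on `X` are transitive. -/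
theorem stmt_10 {H₂ : Type u₁} {H₁ : Type u₂} {X : Type u₃} [Group H₂] [Group H₁]
    (B : BisetAction H₂ H₁ X) (hB : B.Bifree) (hInd : B.Indecomposable)
    (hne : Nonempty X) :
    (((∀ u v : X, ∃ a : H₂, v = B.l a u) ∧ (∀ u v : X, ∃ b : H₁, v = B.r u b)) →
      (∀ BPa : BisetAction H₂ H₂ (Quot (bpRel B B.op)),
        (∀ (a : H₂) (y z : X),
            BPa.l a (Quot.mk (bpRel B B.op) (y, z)) =
              Quot.mk (bpRel B B.op) (B.l a y, z)) →
        (∀ (y z : X) (b : H₂),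
            BPa.r (Quot.mk (bpRel B B.op) (y, z)) b =
              Quot.mk (bpRel B B.op) (y, B.op.r z b)) →
        ∃ f : Quot (bpRel B B.op) → H₂, Function.Bijective f ∧
          (∀ (a : H₂) (q : Quot (bpRel B B.op)), f (BPa.l a q) = a * f q) ∧
          (∀ (q : Quot (bpRel B B.op)) (b : H₂), f (BPa.r q b) = f q * b)) ∧
      (∀ BPb : BisetAction H₁ H₁ (Quot (bpRel B.op B)),
        (∀ (a : H₁) (y z : X),
            BPb.l a (Quot.mk (bpRel B.op B) (y, z)) =
              Quot.mk (bpRel B.op B) (B.op.l a y, z)) →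
        (∀ (y z : X) (b : H₁),
            BPb.r (Quot.mk (bpRel B.op B) (y, z)) b =
              Quot.mk (bpRel B.op B) (y, B.r z b)) →
        ∃ g : Quot (bpRel B.op B) → H₁, Function.Bijective g ∧
          (∀ (a : H₁) (q : Quot (bpRel B.op B)), g (BPb.l a q) = a * g q) ∧
          (∀ (q : Quot (bpRel B.op B)) (b : H₁), g (BPb.r q b) = g q * b))) ∧
    (∀ (Y : Type u₄) (C : BisetAction H₁ H₂ Y), C.Bifree →
      ∀ BPc : BisetAction H₂ H₂ (Quot (bpRel B C)),
        (∀ (a : H₂) (y : X) (z : Y),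
            BPc.l a (Quot.mk (bpRel B C) (y, z)) =
              Quot.mk (bpRel B C) (B.l a y, z)) →
        (∀ (y : X) (z : Y) (b : H₂),
            BPc.r (Quot.mk (bpRel B C) (y, z)) b =
              Quot.mk (bpRel B C) (y, C.r z b)) →
      ∀ BPd : BisetAction H₁ H₁ (Quot (bpRel C B)),
        (∀ (a : H₁) (z : Y) (y : X),
            BPd.l a (Quot.mk (bpRel C B) (z, y)) =
              Quot.mk (bpRel C B) (C.l a z, y)) →
        (∀ (z : Y) (y : X) (b : H₁),
            BPd.r (Quot.mk (bpRel C B) (z, y)) b =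
              Quot.mk (bpRel C B) (z, B.r y b)) →
      (∃ f : Quot (bpRel B C) → H₂, Function.Bijective f ∧
          (∀ (a : H₂) (q : Quot (bpRel B C)), f (BPc.l a q) = a * f q) ∧
          (∀ (q : Quot (bpRel B C)) (b : H₂), f (BPc.r q b) = f q * b)) →
      (∃ g : Quot (bpRel C B) → H₁, Function.Bijective g ∧
          (∀ (a : H₁) (q : Quot (bpRel C B)), g (BPd.l a q) = a * g q) ∧
          (∀ (q : Quot (bpRel C B)) (b : H₁), g (BPd.r q b) = g q * b)) →
      ((∀ u v : X, ∃ a : H₂, v = B.l a u) ∧ (∀ u v : X, ∃ b : H₁, v = B.r u b))) := by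
  obtain ⟨x₀⟩ := hne
  constructor
  · rintro ⟨hL, hR⟩
    constructor
    · -- X ×_{H₁} τ(X) ≅ H₂
      intro BPa hl hr
      set f0 : X × X → H₂ := fun p => Classical.choose (hL p.2 p.1) with hf0def
      have spec : ∀ p : X × X, p.1 = B.l (f0 p) p.2 :=
        fun p => Classical.choose_spec (hL p.2 p.1)
      have funiq : ∀ (p : X × X) (a : H₂), p.1 = B.l a p.2 → f0 p = a :=
        fun p a h => B.aux_l_cancel hB ((spec p).symm.trans h)
      have hsound : ∀ p q, bpRel B B.op p q → f0 p = f0 q := by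
        rintro p q ⟨h, h1, h2⟩
        have hq2 : B.r q.2 h = p.2 := by
          rw [h2]; show B.r (B.r p.2 h⁻¹) h = p.2
          rw [← B.r_mul, inv_mul_cancel, B.r_one]
        refine funiq p (f0 q) ?_
        calc p.1 = B.r q.1 h := h1
          _ = B.r (B.l (f0 q) q.2) h := by rw [← spec q]
          _ = B.l (f0 q) (B.r q.2 h) := B.comm _ _ _
          _ = B.l (f0 q) p.2 := by rw [hq2]
      refine ⟨Quot.lift f0 hsound, ⟨?_, ?_⟩, ?_, ?_⟩
      · -- injective
        intro q q' hqq'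
        obtain ⟨p, rfl⟩ := Quot.exists_rep q
        obtain ⟨p', rfl⟩ := Quot.exists_rep q'
        have hqq2 : f0 p = f0 p' := hqq'
        obtain ⟨h, hh⟩ := hR p.2 p'.2
        have h1 : p'.1 = B.r p.1 h := by
          calc p'.1 = B.l (f0 p') p'.2 := spec p'
            _ = B.l (f0 p) (B.r p.2 h) := by rw [hqq2, hh]
            _ = B.r (B.l (f0 p) p.2) h := (B.comm _ _ _).symm
            _ = B.r p.1 h := by rw [← spec p]
        refine (Quot.sound ⟨h, h1, ?_⟩).symm
        show p.2 = B.r p'.2 h⁻¹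
        rw [hh, ← B.r_mul, mul_inv_cancel, B.r_one]
      · -- surjective
        intro a
        exact ⟨Quot.mk _ (B.l a x₀, x₀), funiq (B.l a x₀, x₀) a rfl⟩
      · -- left equivariance
        intro a q
        obtain ⟨p, rfl⟩ := Quot.exists_rep q
        rw [hl a p.1 p.2]
        refine funiq (B.l a p.1, p.2) (a * f0 p) ?_
        show B.l a p.1 = B.l (a * f0 p) p.2
        rw [B.l_mul, ← spec p]
      · -- right equivariance
        intro q b
        obtain ⟨p, rfl⟩ := Quot.exists_rep q
        rw [hr p.1 p.2 b]
        refine funiq (p.1, B.op.r p.2 b) (f0 p * b) ?_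
        show p.1 = B.l (f0 p * b) (B.l b⁻¹ p.2)
        rw [← B.l_mul, mul_assoc, mul_inv_cancel, mul_one, ← spec p]
    · -- τ(X) ×_{H₂} X ≅ H₁
      intro BPb hl hr
      set g0 : X × X → H₁ := fun p => Classical.choose (hR p.1 p.2) with hg0def
      have spec : ∀ p : X × X, p.2 = B.r p.1 (g0 p) :=
        fun p => Classical.choose_spec (hR p.1 p.2)
      have guniq : ∀ (p : X × X) (b : H₁), p.2 = B.r p.1 b → g0 p = b :=
        fun p b h => B.aux_r_cancel hB ((spec p).symm.trans h)
      have hsound : ∀ p q, bpRel B.op B p q → g0 p = g0 q := by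
        rintro p q ⟨h, h1, h2⟩
        have hq1 : q.1 = B.l h p.1 := by
          have h1' : p.1 = B.l h⁻¹ q.1 := h1
          rw [h1', ← B.l_mul, mul_inv_cancel, B.l_one]
        refine guniq p (g0 q) (B.aux_l_injx h ?_)
        calc B.l h p.2 = q.2 := h2.symm
          _ = B.r q.1 (g0 q) := spec q
          _ = B.r (B.l h p.1) (g0 q) := by rw [hq1]
          _ = B.l h (B.r p.1 (g0 q)) := B.comm _ _ _
      refine ⟨Quot.lift g0 hsound, ⟨?_, ?_⟩, ?_, ?_⟩
      · -- injective
        intro q q' hqq'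
        obtain ⟨p, rfl⟩ := Quot.exists_rep q
        obtain ⟨p', rfl⟩ := Quot.exists_rep q'
        have hqq2 : g0 p = g0 p' := hqq'
        obtain ⟨a, ha⟩ := hL p.1 p'.1
        have h2 : p'.2 = B.l a p.2 := by
          calc p'.2 = B.r p'.1 (g0 p') := spec p'
            _ = B.r (B.l a p.1) (g0 p) := by rw [hqq2, ha]
            _ = B.l a (B.r p.1 (g0 p)) := B.comm _ _ _
            _ = B.l a p.2 := by rw [← spec p]
        refine (Quot.sound ⟨a⁻¹, ?_, ?_⟩).symm
        · show p'.1 = B.l a⁻¹⁻¹ p.1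
          rw [inv_inv, ha]
        · show p.2 = B.l a⁻¹ p'.2
          rw [h2, ← B.l_mul, inv_mul_cancel, B.l_one]
      · -- surjective
        intro b
        exact ⟨Quot.mk _ (x₀, B.r x₀ b), guniq (x₀, B.r x₀ b) b rfl⟩
      · -- left equivariance
        intro a q
        obtain ⟨p, rfl⟩ := Quot.exists_rep q
        rw [hl a p.1 p.2]
        refine guniq (B.op.l a p.1, p.2) (a * g0 p) ?_
        show p.2 = B.r (B.r p.1 a⁻¹) (a * g0 p)
        rw [← B.r_mul, ← mul_assoc, inv_mul_cancel, one_mul, ← spec p]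
      · -- right equivariance
        intro q b
        obtain ⟨p, rfl⟩ := Quot.exists_rep q
        rw [hr p.1 p.2 b]
        refine guniq (p.1, B.r p.2 b) (g0 p * b) ?_
        show B.r p.2 b = B.r p.1 (g0 p * b)
        rw [B.r_mul, ← spec p]
  · rintro Y C hC BPc hcl hcr BPd hdl hdr ⟨f, hf, hfl, hfr⟩ ⟨g, hg, hgl, hgr⟩
    obtain ⟨qf, hqf⟩ := hf.2 1
    obtain ⟨⟨y₁, z₁⟩, rfl⟩ := Quot.exists_rep qf
    obtain ⟨qg, hqg⟩ := hg.2 1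
    obtain ⟨⟨z₀, y₀⟩, rfl⟩ := Quot.exists_rep qg
    have key1 : ∀ a : H₂, ∃ h : H₁, B.l a y₁ = B.r y₁ h := by
      intro a
      have e1 : f (Quot.mk _ (B.l a y₁, z₁)) = a := by
        rw [← hcl a y₁ z₁, hfl, hqf, mul_one]
      have e2 : f (Quot.mk _ (y₁, C.r z₁ a)) = a := by
        rw [← hcr y₁ z₁ a, hfr, hqf, one_mul]
      obtain ⟨h, h1, h2⟩ := bp_mk_eq B C (hf.1 (e1.trans e2.symm))
      exact ⟨h, h1⟩
    have key2 : ∀ b : H₁, ∃ h : H₂, B.r y₀ b = B.l h y₀ := by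
      intro b
      have e1 : g (Quot.mk _ (C.l b z₀, y₀)) = b := by
        rw [← hdl b z₀ y₀, hgl, hqg, mul_one]
      have e2 : g (Quot.mk _ (z₀, B.r y₀ b)) = b := by
        rw [← hdr z₀ y₀ b, hgr, hqg, one_mul]
      obtain ⟨h, h1, h2⟩ := bp_mk_eq C B (hg.1 (e1.trans e2.symm))
      exact ⟨h, h2⟩
    have horbL : ∀ u : X, ∃ a : H₂, u = B.l a y₀ := by
      intro u
      obtain ⟨a, b, hab⟩ := hInd y₀ u
      obtain ⟨h, hh⟩ := key2 b
      exact ⟨a * h, by rw [hab, B.comm, hh, ← B.l_mul]⟩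
    have horbR : ∀ u : X, ∃ b : H₁, u = B.r y₁ b := by
      intro u
      obtain ⟨a, b, hab⟩ := hInd y₁ u
      obtain ⟨h, hh⟩ := key1 a
      exact ⟨h * b, by rw [hab, hh, B.r_mul]⟩
    constructor
    · intro u v
      obtain ⟨a₁, h1⟩ := horbL u
      obtain ⟨a₂, h2⟩ := horbL v
      exact ⟨a₂ * a₁⁻¹, by rw [h2, h1, ← B.l_mul, inv_mul_cancel_right]⟩
    · intro u v
      obtain ⟨b₁, h1⟩ := horbR u
      obtain ⟨b₂, h2⟩ := horbR v
      exact ⟨b₁⁻¹ * b₂, by rw [h2, h1, ← B.r_mul, mul_inv_cancel_left]⟩
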